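/- For every r ∈ (r_min, |μ|], the set of minimal directions ubar Λ_r := argmin_{|ℓ|=1} I(rℓ) contains exactly one element. -/

import Mathlib

open MeasureTheory Set Filter
open scoped ENNReal NNReal RealInnerProductSpace Topology

noncomputable section

/-- The plane `ℝ²`. -/
abbrev E2 : Type := EuclideanSpace ℝ (Fin 2)

/-- The Laplace transform `𝓛(u) = 𝔼 e^{u·X₁}` of the random vector `X1`. -/
def lapT {Ω : Type*} [MeasurableSpace Ω] (P : Measure Ω) (X1 : Ω → E2) (u : E2) : ℝ :=
  ∫ ω, Real.exp ⟪u, X1 ω⟫ ∂P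

/-- The cumulant generating function `K(u) = log 𝓛(u)`. -/
def cgfT {Ω : Type*} [MeasurableSpace Ω] (P : Measure Ω) (X1 : Ω → E2) (u : E2) : ℝ :=
  Real.log (lapT P X1 u)

/-- The rate function `I = K*`, the Legendre–Fenchel conjugate of `K`.
Since `I ≥ 0` (the value `0 = 0·v - K(0)` is always attained in the supremum),
we may record it as an `ℝ≥0∞`-valued supremum, clamping negatives to `0`. -/
def rateI {Ω : Type*} [MeasurableSpace Ω] (P : Measure Ω) (X1 : Ω → E2) (v : E2) : ℝ≥0∞ :=
  ⨆ u : E2, ENNReal.ofReal (⟪u, v⟫ - cgfT P X1 u)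

/-- The radial minimum function `ubar I (r) = inf_{|ℓ|=1} I(rℓ)`, `+∞` for `r < 0`. -/
def radMin {Ω : Type*} [MeasurableSpace Ω] (P : Measure Ω) (X1 : Ω → E2) (r : ℝ) : ℝ≥0∞ :=
  if r < 0 then ⊤ else ⨅ ℓ ∈ {ℓ : E2 | ‖ℓ‖ = 1}, rateI P X1 (r • ℓ)

/-- The set of minimal directions `ubar Λ_r = argmin_{|ℓ|=1} I(rℓ)`. -/
def minDirs {Ω : Type*} [MeasurableSpace Ω] (P : Measure Ω) (X1 : Ω → E2) (r : ℝ) : Set E2 :=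
  {ℓ : E2 | ‖ℓ‖ = 1 ∧ ∀ ℓ' : E2, ‖ℓ'‖ = 1 → rateI P X1 (r • ℓ) ≤ rateI P X1 (r • ℓ')}

/-- The topological support of a measure on `ℝ²`: the points all of whose open
neighbourhoods have positive measure. -/
def msupp (ν : Measure E2) : Set E2 := {x | ∀ U : Set E2, IsOpen U → x ∈ U → 0 < ν U}

/-- The mean `μ = 𝔼 X₁`. -/
def meanv {Ω : Type*} [MeasurableSpace Ω] (P : Measure Ω) (X1 : Ω → E2) : E2 :=
  ∫ ω, X1 ω ∂P

/-- `r_min = min { |x| : x ∈ conv (supp X₁) }`. -/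
def rmin {Ω : Type*} [MeasurableSpace Ω] (P : Measure Ω) (X1 : Ω → E2) : ℝ :=
  sInf (norm '' (convexHull ℝ (msupp (P.map X1))))

/-- `r_max = max { |x| : x ∈ supp X₁ }`, as an element of `[0,∞]` (possibly `∞`). -/
def rmaxE {Ω : Type*} [MeasurableSpace Ω] (P : Measure Ω) (X1 : Ω → E2) : ℝ≥0∞ :=
  ⨆ y ∈ msupp (P.map X1), (‖y‖₊ : ℝ≥0∞)

/-- Convexity of an `[0,∞]`-valued function on a subset of `ℝ`. -/
def ENNConvexOn (s : Set ℝ) (g : ℝ → ℝ≥0∞) : Prop :=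
  ∀ ⦃x⦄, x ∈ s → ∀ ⦃y⦄, y ∈ s → ∀ a b : ℝ≥0, a + b = 1 →
    g ((a : ℝ) * x + (b : ℝ) * y) ≤ (a : ℝ≥0∞) * g x + (b : ℝ≥0∞) * g y

/-- The largest convex minorant of an `[0,∞]`-valued function on `ℝ`. -/
def convMin (g : ℝ → ℝ≥0∞) (x : ℝ) : ℝ≥0∞ :=
  ⨆ h ∈ {h : ℝ → ℝ≥0∞ | ENNConvexOn Set.univ h ∧ ∀ y, h y ≤ g y}, h x

/-!
The rate function `I` is a supremum of affine functions, hence convex and lower semicontinuous,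
and it vanishes exactly at the mean `μ` (there the cumulant generating function of `⟪u, X₁⟫`
has derivative `⟪u, μ⟫`). Conditional means of `X₁` over balls around support points have
finite rate, so since `r > r_min` some point of norm `< r` has finite rate, and convexity
along the segment towards `μ` carries it to the circle of radius `r`: the minimum `m` of `I`
on that circle is finite. If two directions attained `m`, then `m > 0`, and the midpoint of the
two minimisers lies strictly inside the circle with rate `≤ m`; moving from it towards `μ`
until the circle is hit would give a point of the circle with rate `< m`.
-/

open ProbabilityTheory

lemma exists_norm_combo_eq {E : Type*} [NormedAddCommGroup E] [NormedSpace ℝ E]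
    {x y : E} {r : ℝ} (hx : ‖x‖ < r) (hy : r ≤ ‖y‖) :
    ∃ σ ∈ Ioc (0 : ℝ) 1, ‖(1 - σ) • x + σ • y‖ = r := by
  have hcont : ContinuousOn (fun σ : ℝ => ‖(1 - σ) • x + σ • y‖) (Icc 0 1) := by fun_prop
  exact intermediate_value_Ioc zero_le_one hcont (by simpa using (⟨hx, hy⟩ : r ∈ Ioc ‖x‖ ‖y‖))

lemma msupp_eq_support (ν : Measure E2) : msupp ν = ν.support := by
  simp [msupp, Measure.support_eq_forall_isOpen, imp.swap]

lemma rmin_nonneg {Ω : Type*} [MeasurableSpace Ω] (P : Measure Ω) (X1 : Ω → E2) :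
    0 ≤ rmin P X1 :=
  Real.sInf_nonneg (by rintro _ ⟨x, -, rfl⟩; exact norm_nonneg x)

section RateFunction

variable {Ω : Type*} [MeasurableSpace Ω] (P : Measure Ω) (X1 : Ω → E2)

lemma ofReal_le_rateI (u v : E2) : ENNReal.ofReal (⟪u, v⟫ - cgfT P X1 u) ≤ rateI P X1 v :=
  le_iSup (fun u => ENNReal.ofReal (⟪u, v⟫ - cgfT P X1 u)) u

lemma rateI_le_ofReal {v : E2} {c : ℝ} (h : ∀ u, ⟪u, v⟫ - cgfT P X1 u ≤ c) :
    rateI P X1 v ≤ ENNReal.ofReal c :=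
  iSup_le fun u => ENNReal.ofReal_le_ofReal (h u)

lemma rateI_eq_zero_iff {v : E2} : rateI P X1 v = 0 ↔ ∀ u, ⟪u, v⟫ ≤ cgfT P X1 u := by
  simp [rateI]

lemma lowerSemicontinuous_rateI : LowerSemicontinuous (rateI P X1) :=
  lowerSemicontinuous_iSup fun _ =>
    (ENNReal.continuous_ofReal.comp (by fun_prop)).lowerSemicontinuous

lemma rateI_combo_le {a b : ℝ} (ha : 0 ≤ a) (hb : 0 ≤ b) (hab : a + b = 1) (x y : E2) :
    rateI P X1 (a • x + b • y)
      ≤ ENNReal.ofReal a * rateI P X1 x + ENNReal.ofReal b * rateI P X1 y := by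
  refine iSup_le fun u => ?_
  calc ENNReal.ofReal (⟪u, a • x + b • y⟫ - cgfT P X1 u)
      = ENNReal.ofReal (a * (⟪u, x⟫ - cgfT P X1 u) + b * (⟪u, y⟫ - cgfT P X1 u)) := by
        rw [inner_add_right, real_inner_smul_right, real_inner_smul_right]
        congr 1
        linear_combination cgfT P X1 u * hab
    _ ≤ ENNReal.ofReal a * ENNReal.ofReal (⟪u, x⟫ - cgfT P X1 u)
          + ENNReal.ofReal b * ENNReal.ofReal (⟪u, y⟫ - cgfT P X1 u) := by
        rw [← ENNReal.ofReal_mul ha, ← ENNReal.ofReal_mul hb]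
        exact ENNReal.ofReal_add_le
    _ ≤ ENNReal.ofReal a * rateI P X1 x + ENNReal.ofReal b * rateI P X1 y := by
        gcongr <;> exact ofReal_le_rateI P X1 u _

lemma convex_rateI_ne_top : Convex ℝ {v | rateI P X1 v ≠ ⊤} := by
  intro x hx y hy a b ha hb hab
  refine ne_top_of_le_ne_top ?_ (rateI_combo_le P X1 ha hb hab x y)
  exact ENNReal.add_ne_top.2 ⟨ENNReal.mul_ne_top ENNReal.ofReal_ne_top hx,
    ENNReal.mul_ne_top ENNReal.ofReal_ne_top hy⟩

lemma exists_norm_eq_rateI_le {w y : E2} {r : ℝ} (hy0 : rateI P X1 y = 0) (hw : ‖w‖ < r)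
    (hy : r ≤ ‖y‖) :
    ∃ z : E2, ‖z‖ = r ∧ ∃ c < 1, rateI P X1 z ≤ ENNReal.ofReal c * rateI P X1 w := by
  obtain ⟨σ, ⟨hσ0, hσ1⟩, hσr⟩ := exists_norm_combo_eq hw hy
  refine ⟨_, hσr, 1 - σ, by linarith, ?_⟩
  simpa [hy0] using rateI_combo_le P X1 (sub_nonneg.2 hσ1) hσ0.le (sub_add_cancel 1 σ) w y

lemma minDirs_nonempty (r : ℝ) : (minDirs P X1 r).Nonempty := by
  obtain ⟨ℓ, hℓ, hmin⟩ :=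
    ((lowerSemicontinuous_rateI P X1).comp (continuous_const_smul r)).lowerSemicontinuousOn _
      |>.exists_isMinOn (NormedSpace.sphere_nonempty.2 zero_le_one) (isCompact_sphere 0 1)
  exact ⟨ℓ, mem_sphere_zero_iff_norm.1 hℓ, fun ℓ' hℓ' => hmin (mem_sphere_zero_iff_norm.2 hℓ')⟩

lemma rateI_smul_le_of_mem_minDirs {r : ℝ} (hr : 0 < r) {ℓ z : E2} (hℓ : ℓ ∈ minDirs P X1 r)
    (hz : ‖z‖ = r) : rateI P X1 (r • ℓ) ≤ rateI P X1 z := by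
  have hz' : ‖r⁻¹ • z‖ = 1 := by
    rw [norm_smul, hz, Real.norm_of_nonneg (inv_nonneg.2 hr.le), inv_mul_cancel₀ hr.ne']
  simpa [smul_inv_smul₀ hr.ne'] using hℓ.2 _ hz'

end RateFunction

section Probability

variable {Ω : Type*} [MeasurableSpace Ω] {P : Measure Ω} {X1 : Ω → E2}

lemma integrableExpSet_inner_eq_univ
    (hLap : ∀ u : E2, Integrable (fun ω => Real.exp ⟪u, X1 ω⟫) P) (u : E2) :
    integrableExpSet (fun ω => ⟪u, X1 ω⟫) P = univ := by
  ext t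
  simpa [integrableExpSet, real_inner_smul_left] using hLap (t • u)

lemma integrable_inner_of_integrable_exp
    (hLap : ∀ u : E2, Integrable (fun ω => Real.exp ⟪u, X1 ω⟫) P) (u : E2) :
    Integrable (fun ω => ⟪u, X1 ω⟫) P :=
  integrable_of_mem_interior_integrableExpSet (by simp [integrableExpSet_inner_eq_univ hLap])

lemma integrable_of_integrable_exp
    (hLap : ∀ u : E2, Integrable (fun ω => Real.exp ⟪u, X1 ω⟫) P) : Integrable X1 P :=
  integrable_piLp_iff.2 fun i => by
    simpa [EuclideanSpace.inner_single_left] using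
      integrable_inner_of_integrable_exp hLap (EuclideanSpace.single i 1)

lemma cgfT_smul (u : E2) (t : ℝ) :
    cgfT P X1 (t • u) = cgf (fun ω => ⟪u, X1 ω⟫) P t := by
  simp [cgfT, lapT, cgf, mgf, real_inner_smul_left]

variable [IsProbabilityMeasure P]

lemma inner_setAverage_sub_cgfT_le
    (hLap : ∀ u : E2, Integrable (fun ω => Real.exp ⟪u, X1 ω⟫) P) {A : Set Ω} (hA : P A ≠ 0)
    (u : E2) : ⟪u, ⨍ ω in A, X1 ω ∂P⟫ - cgfT P X1 u ≤ -Real.log (P.real A) := by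
  have hPA : 0 < P.real A := ENNReal.toReal_pos hA (measure_ne_top P A)
  have jensen : Real.exp (⨍ ω in A, ⟪u, X1 ω⟫ ∂P) ≤ ⨍ ω in A, Real.exp ⟪u, X1 ω⟫ ∂P :=
    convexOn_exp.map_set_average_le Real.continuous_exp.continuousOn isClosed_univ hA
      (measure_ne_top P A) (by simp) (integrable_inner_of_integrable_exp hLap u).integrableOn
      (hLap u).integrableOn
  have hinner : ⨍ ω in A, ⟪u, X1 ω⟫ ∂P = ⟪u, ⨍ ω in A, X1 ω ∂P⟫ :=
    integral_inner (integrable_of_integrable_exp hLap).integrableOn.to_average u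
  have havg : ⨍ ω in A, Real.exp ⟪u, X1 ω⟫ ∂P ≤ (P.real A)⁻¹ * lapT P X1 u := by
    rw [setAverage_eq, smul_eq_mul]
    gcongr
    exact setIntegral_le_integral (hLap u) (.of_forall fun _ => (Real.exp_pos _).le)
  have hlog := Real.log_le_log (Real.exp_pos _) (jensen.trans havg)
  rw [hinner, Real.log_exp, Real.log_mul (y := lapT P X1 u) (inv_ne_zero hPA.ne')
    (integral_exp_pos (hLap u)).ne', Real.log_inv] at hlog
  rw [cgfT]
  linarith

lemma rateI_meanv (hLap : ∀ u : E2, Integrable (fun ω => Real.exp ⟪u, X1 ω⟫) P) :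
    rateI P X1 (meanv P X1) = 0 := by
  refine le_antisymm ?_ zero_le
  have h := inner_setAverage_sub_cgfT_le hLap (A := univ) (by simp)
  simp only [Measure.restrict_univ, average_eq_integral, probReal_univ, Real.log_one,
    neg_zero] at h
  simpa [meanv] using rateI_le_ofReal P X1 h

lemma eq_meanv_of_rateI_eq_zero (hLap : ∀ u : E2, Integrable (fun ω => Real.exp ⟪u, X1 ω⟫) P)
    {v : E2} (hv : rateI P X1 v = 0) : v = meanv P X1 := by
  refine ext_inner_left ℝ fun u => ?_
  have h0 : (0 : ℝ) ∈ interior (integrableExpSet (fun ω => ⟪u, X1 ω⟫) P) := by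
    simp [integrableExpSet_inner_eq_univ hLap]
  have hmin : IsLocalMin (fun t => cgf (fun ω => ⟪u, X1 ω⟫) P t - t * ⟪u, v⟫) 0 :=
    .of_forall fun t => by
      have := (rateI_eq_zero_iff P X1).1 hv (t • u)
      rw [cgfT_smul, real_inner_smul_left] at this
      simpa using this
  have hderiv : HasDerivAt (fun t => cgf (fun ω => ⟪u, X1 ω⟫) P t - t * ⟪u, v⟫)
      (P[fun ω => ⟪u, X1 ω⟫] - ⟪u, v⟫) 0 := by
    have h := (analyticAt_cgf h0).differentiableAt.hasDerivAt
    rw [deriv_cgf_zero h0, probReal_univ, div_one] at h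
    exact h.sub (hasDerivAt_mul_const _)
  rw [meanv, ← integral_inner (integrable_of_integrable_exp hLap)]
  linarith [hmin.hasDerivAt_eq_zero hderiv]

lemma rateI_setAverage_ne_top
    (hLap : ∀ u : E2, Integrable (fun ω => Real.exp ⟪u, X1 ω⟫) P) {A : Set Ω} (hA : P A ≠ 0) :
    rateI P X1 (⨍ ω in A, X1 ω ∂P) ≠ ⊤ :=
  ne_top_of_le_ne_top ENNReal.ofReal_ne_top
    (rateI_le_ofReal P X1 (inner_setAverage_sub_cgfT_le hLap hA))

lemma msupp_subset_closure_rateI_ne_top (hX : Measurable X1)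
    (hLap : ∀ u : E2, Integrable (fun ω => Real.exp ⟪u, X1 ω⟫) P) :
    msupp (P.map X1) ⊆ closure {v | rateI P X1 v ≠ ⊤} := by
  intro z hz
  refine Metric.mem_closure_iff.2 fun ε hε => ?_
  have hA : P (X1 ⁻¹' Metric.ball z (ε / 2)) ≠ 0 := by
    have := hz _ Metric.isOpen_ball (Metric.mem_ball_self (half_pos hε))
    rw [Measure.map_apply hX measurableSet_ball] at this
    exact this.ne'
  have hmem : ⨍ ω in X1 ⁻¹' Metric.ball z (ε / 2), X1 ω ∂P ∈ Metric.closedBall z (ε / 2) :=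
    (convex_closedBall z _).set_average_mem Metric.isClosed_closedBall hA (measure_ne_top _ _)
      ((ae_restrict_iff' (hX measurableSet_ball)).2
        (.of_forall fun ω hω => Metric.ball_subset_closedBall hω))
      (integrable_of_integrable_exp hLap).integrableOn
  refine ⟨_, rateI_setAverage_ne_top hLap hA, ?_⟩
  rw [dist_comm]
  linarith [Metric.mem_closedBall.1 hmem]

lemma exists_norm_lt_rateI_ne_top (hX : Measurable X1)
    (hLap : ∀ u : E2, Integrable (fun ω => Real.exp ⟪u, X1 ω⟫) P) {r : ℝ} (hr : rmin P X1 < r) :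
    ∃ x : E2, ‖x‖ < r ∧ rateI P X1 x ≠ ⊤ := by
  have hsupp : (msupp (P.map X1)).Nonempty := by
    have := Measure.isProbabilityMeasure_map (μ := P) hX.aemeasurable
    rw [msupp_eq_support]
    exact Measure.nonempty_support (IsProbabilityMeasure.ne_zero _)
  obtain ⟨_, ⟨x, hx, rfl⟩, hxr⟩ := exists_lt_of_csInf_lt
    ((hsupp.mono (subset_convexHull ℝ _)).image norm) hr
  have hx' := convexHull_min (msupp_subset_closure_rateI_ne_top hX hLap)
    (convex_rateI_ne_top P X1).closure hx
  obtain ⟨y, hy, hxy⟩ := Metric.mem_closure_iff.1 hx' (r - ‖x‖) (by linarith)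
  exact ⟨y, by linarith [norm_le_norm_add_norm_sub' y x, dist_eq_norm' x y], hy⟩

lemma minDirs_subsingleton (hLap : ∀ u : E2, Integrable (fun ω => Real.exp ⟪u, X1 ω⟫) P)
    {r : ℝ} (hr0 : 0 < r) (hr : r ≤ ‖meanv P X1‖)
    {z : E2} (hz : ‖z‖ = r) (hz_fin : rateI P X1 z ≠ ⊤) : (minDirs P X1 r).Subsingleton := by
  intro ℓ₁ h₁ ℓ₂ h₂
  by_contra hne
  set m := rateI P X1 (r • ℓ₁)
  have hm₂ : rateI P X1 (r • ℓ₂) = m := le_antisymm (h₂.2 ℓ₁ h₁.1) (h₁.2 ℓ₂ h₂.1)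
  have hm_top : m ≠ ⊤ := ne_top_of_le_ne_top hz_fin (rateI_smul_le_of_mem_minDirs P X1 hr0 h₁ hz)
  have hm_zero : m ≠ 0 := fun h0 => hne <| smul_right_injective E2 hr0.ne' <|
    (eq_meanv_of_rateI_eq_zero hLap h0).trans (eq_meanv_of_rateI_eq_zero hLap (hm₂.trans h0)).symm
  have hnorm : ∀ ℓ ∈ minDirs P X1 r, ‖r • ℓ‖ ≤ r := fun ℓ hℓ => by
    rw [norm_smul, hℓ.1, Real.norm_of_nonneg hr0.le, mul_one]
  set w := (1 / 2 : ℝ) • (r • ℓ₁) + (1 / 2 : ℝ) • (r • ℓ₂)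
  have hw : ‖w‖ < r :=
    norm_combo_lt_of_ne (hnorm ℓ₁ h₁) (hnorm ℓ₂ h₂)
      (fun h => hne (smul_right_injective E2 hr0.ne' h)) (by norm_num) (by norm_num) (by norm_num)
  have hwm : rateI P X1 w ≤ m := calc
    _ ≤ ENNReal.ofReal (1 / 2) * m + ENNReal.ofReal (1 / 2) * m := by
      simpa only [hm₂] using rateI_combo_le P X1 (a := 1 / 2) (b := 1 / 2)
        (by norm_num) (by norm_num) (by norm_num) (r • ℓ₁) (r • ℓ₂)
    _ = m := by
      rw [← add_mul, ← ENNReal.ofReal_add (by norm_num) (by norm_num)]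
      norm_num
  obtain ⟨z', hz', c, hc, hz'w⟩ := exists_norm_eq_rateI_le P X1 (rateI_meanv hLap) hw hr
  have : m < m := calc
    m ≤ rateI P X1 z' := rateI_smul_le_of_mem_minDirs P X1 hr0 h₁ hz'
    _ ≤ ENNReal.ofReal c * m := hz'w.trans (by gcongr)
    _ < 1 * m := ENNReal.mul_lt_mul_left hm_zero hm_top (ENNReal.ofReal_lt_one.2 hc)
    _ = m := one_mul m
  exact this.false

end Probability

/-- For every `r ∈ (r_min, |μ|]`, the set of minimal directions
`ubar Λ_r = argmin_{|ℓ|=1} I(rℓ)` contains exactly one element. -/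
theorem minDirs_unique
    {Ω : Type*} [MeasurableSpace Ω] (P : Measure Ω) [IsProbabilityMeasure P]
    (X1 : Ω → E2) (hX : Measurable X1)
    (hLap : ∀ u : E2, Integrable (fun ω => Real.exp ⟪u, X1 ω⟫) P)
    (r : ℝ) (hr : rmin P X1 < r) (hr' : r ≤ ‖meanv P X1‖) :
    ∃! ℓ : E2, ℓ ∈ minDirs P X1 r := by
  obtain ⟨x, hxr, hx⟩ := exists_norm_lt_rateI_ne_top hX hLap hr
  obtain ⟨z, hz, c, -, hzx⟩ := exists_norm_eq_rateI_le P X1 (rateI_meanv hLap) hxr hr'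
  have hz_fin : rateI P X1 z ≠ ⊤ :=
    ne_top_of_le_ne_top (ENNReal.mul_ne_top ENNReal.ofReal_ne_top hx) hzx
  have hunique := minDirs_subsingleton hLap ((rmin_nonneg P X1).trans_lt hr) hr' hz hz_fin
  obtain ⟨ℓ, hℓ⟩ := minDirs_nonempty P X1 r
  exact ⟨ℓ, hℓ, fun ℓ' hℓ' => hunique hℓ' hℓ⟩

end
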